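/- arXiv:2101.00791 — 3 statements merged into one kernel-verified Lean document; each statement's English description precedes it below -/
import Mathlib

section
/- Let a, b be orthonormal vectors in ℝ³, let 0 < t₁ < π, and let γ(t) := (cos t) a + (sin t) b for t ∈ [0, t₁] (a unit-speed geodesic on the unit sphere with γ(0) + γ(t) ≠ 0 for all t ∈ [0, t₁]). Let W₀ ∈ ℝ³ satisfy ⟨W₀, a⟩ = 0, and define V(t) := R_{γ(0)→γ(t)}(W₀) for t ∈ (0, t₁] and V(0) := W₀. Then V is differentiable on (0, t₁) and its derivative is normal to the sphere at γ(t): V′(t) = ⟨V′(t), γ(t)⟩ γ(t) for all t ∈ (0, t₁); that is, V is a parallel vector field along the geodesic γ. -/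
open Matrix Set
open scoped BigOperators

noncomputable section

/-- The Euclidean norm on `ℝ³`, realized as `Fin 3 → ℝ`. -/
def enorm3 (a : Fin 3 → ℝ) : ℝ := Real.sqrt (a ⬝ᵥ a)

/-- The cross product on `ℝ³`. -/
def cross3 (a b : Fin 3 → ℝ) : Fin 3 → ℝ :=
  ![a 1 * b 2 - a 2 * b 1, a 2 * b 0 - a 0 * b 2, a 0 * b 1 - a 1 * b 0]

/-- The unit vector `u = (z₁ × z₂)/‖z₁ × z₂‖`. -/
def uvec3 (z₁ z₂ : Fin 3 → ℝ) : Fin 3 → ℝ := (enorm3 (cross3 z₁ z₂))⁻¹ • cross3 z₁ z₂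

/-- The rotation matrix `R(z₁,z₂) = ⟨z₁,z₂⟩ I + z₂ z₁ᵀ − z₁ z₂ᵀ + (1 − ⟨z₁,z₂⟩) u uᵀ`. -/
def rotMatrix (z₁ z₂ : Fin 3 → ℝ) : Matrix (Fin 3) (Fin 3) ℝ :=
  (z₁ ⬝ᵥ z₂) • (1 : Matrix (Fin 3) (Fin 3) ℝ)
    + vecMulVec z₂ z₁ - vecMulVec z₁ z₂
    + (1 - z₁ ⬝ᵥ z₂) • vecMulVec (uvec3 z₁ z₂) (uvec3 z₁ z₂)

/-- `R_{z₁→z₂}(v)`, with the convention `R_{z→z} = I`. -/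
def rotApply (z₁ z₂ v : Fin 3 → ℝ) : Fin 3 → ℝ :=
  if z₁ = z₂ then v else (rotMatrix z₁ z₂).mulVec v

/-! For `0 < t < π` the rotation `R(a, γ t)` fixes the axis `n = a × b` and carries the
orthonormal frame `(a, b)` of the plane of `γ` to `(γ t, γ' t)`. As `W₀ ⊥ a`, we have
`W₀ = β b + ν n`, hence `V t = β γ' t + ν n` and `V' t = -β γ t` is normal to the sphere. -/

open Real

lemma cross3_eq_crossProduct (u v : Fin 3 → ℝ) : cross3 u v = u ⨯₃ v := rfl

lemma rotMatrix_mulVec (z₁ z₂ v : Fin 3 → ℝ) :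
    rotMatrix z₁ z₂ *ᵥ v = (z₁ ⬝ᵥ z₂) • v + (z₁ ⬝ᵥ v) • z₂ - (z₂ ⬝ᵥ v) • z₁
      + ((1 - z₁ ⬝ᵥ z₂) * (uvec3 z₁ z₂ ⬝ᵥ v)) • uvec3 z₁ z₂ := by
  simp only [rotMatrix, add_mulVec, sub_mulVec, smul_mulVec, one_mulVec, vecMulVec_mulVec,
    op_smul_eq_smul, smul_smul]

section Orthonormal

variable {a b : Fin 3 → ℝ}

lemma cross_dot_cross_self_of_orthonormal (ha : a ⬝ᵥ a = 1) (hb : b ⬝ᵥ b = 1) (hab : a ⬝ᵥ b = 0) :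
    a ⨯₃ b ⬝ᵥ a ⨯₃ b = 1 := by
  rw [cross_dot_cross, ha, hb, hab, dotProduct_comm, hab]; ring

lemma eq_smul_add_smul_cross_of_dotProduct_eq_zero
    (ha : a ⬝ᵥ a = 1) (hb : b ⬝ᵥ b = 1) (hab : a ⬝ᵥ b = 0)
    {w : Fin 3 → ℝ} (hw : w ⬝ᵥ a = 0) :
    w = (b ⬝ᵥ w) • b + (a ⨯₃ b ⬝ᵥ w) • a ⨯₃ b := by
  set n := a ⨯₃ b
  have hnw : n ⨯₃ w = -(b ⬝ᵥ w) • a := by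
    rw [cross_cross_eq_smul_sub_smul, dotProduct_comm, hw]; module
  have hna : n ⨯₃ a = b := by
    rw [cross_cross_eq_smul_sub_smul, ha, dotProduct_comm, hab]; module
  have key : (n ⬝ᵥ w) • n - w = -(b ⬝ᵥ w) • b :=
    calc (n ⬝ᵥ w) • n - w = (n ⬝ᵥ w) • n - (n ⬝ᵥ n) • w := by
          rw [cross_dot_cross_self_of_orthonormal ha hb hab, one_smul]
      _ = n ⨯₃ (n ⨯₃ w) := (cross_cross_eq_smul_sub_smul' n n w).symm
      _ = -(b ⬝ᵥ w) • b := by rw [hnw, map_smul, hna]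
  linear_combination (norm := module) -key

lemma uvec3_greatCircle (ha : a ⬝ᵥ a = 1) (hb : b ⬝ᵥ b = 1) (hab : a ⬝ᵥ b = 0)
    {t : ℝ} (ht : 0 < sin t) :
    uvec3 a (cos t • a + sin t • b) = a ⨯₃ b := by
  have hcross : cross3 a (cos t • a + sin t • b) = sin t • a ⨯₃ b := by
    simp only [cross3_eq_crossProduct, map_add, map_smul, cross_self, smul_zero, zero_add]
  have hnorm : enorm3 (cross3 a (cos t • a + sin t • b)) = sin t := by
    rw [enorm3, hcross, smul_dotProduct, dotProduct_smul,
      cross_dot_cross_self_of_orthonormal ha hb hab, smul_eq_mul, smul_eq_mul, mul_one,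
      Real.sqrt_mul_self ht.le]
  rw [uvec3, hnorm, hcross, smul_smul, inv_mul_cancel₀ ht.ne', one_smul]

lemma rotApply_greatCircle (ha : a ⬝ᵥ a = 1) (hb : b ⬝ᵥ b = 1) (hab : a ⬝ᵥ b = 0)
    {t : ℝ} (ht : 0 < sin t) {w : Fin 3 → ℝ} (hw : w ⬝ᵥ a = 0) :
    rotApply a (cos t • a + sin t • b) w
      = (b ⬝ᵥ w) • (cos t • b - sin t • a) + (a ⨯₃ b ⬝ᵥ w) • a ⨯₃ b := by
  have hne : a ≠ cos t • a + sin t • b := by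
    intro h
    have := congrArg (· ⬝ᵥ b) h
    simp only [add_dotProduct, smul_dotProduct, hab, hb, smul_eq_mul] at this
    linarith
  rw [rotApply, if_neg hne, rotMatrix_mulVec, uvec3_greatCircle ha hb hab ht]
  have hcos : a ⬝ᵥ (cos t • a + sin t • b) = cos t := by
    simp only [dotProduct_add, dotProduct_smul, ha, hab, smul_eq_mul]; ring
  have haw : a ⬝ᵥ w = 0 := by rw [dotProduct_comm, hw]
  have hsin : (cos t • a + sin t • b) ⬝ᵥ w = sin t * (b ⬝ᵥ w) := by
    simp only [add_dotProduct, smul_dotProduct, haw, smul_eq_mul]; ring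
  rw [hcos, hsin, haw]
  linear_combination (norm := module)
    cos t • eq_smul_add_smul_cross_of_dotProduct_eq_zero ha hb hab hw

lemma greatCircle_dotProduct_self (ha : a ⬝ᵥ a = 1) (hb : b ⬝ᵥ b = 1) (hab : a ⬝ᵥ b = 0)
    (t : ℝ) :
    (cos t • a + sin t • b) ⬝ᵥ (cos t • a + sin t • b) = 1 := by
  simp only [add_dotProduct, dotProduct_add, smul_dotProduct, dotProduct_smul, ha, hb, hab,
    dotProduct_comm b a, smul_eq_mul]
  linear_combination sin_sq_add_cos_sq t

end Orthonormal

theorem rot_parallel_transport_general (a b : Fin 3 → ℝ)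
    (ha : a ⬝ᵥ a = 1) (hb : b ⬝ᵥ b = 1) (hab : a ⬝ᵥ b = 0)
    (t₁ : ℝ) (ht₁' : t₁ < Real.pi)
    (γ : ℝ → Fin 3 → ℝ)
    (hγ : ∀ t, γ t = Real.cos t • a + Real.sin t • b)
    (W₀ : Fin 3 → ℝ) (hW₀ : W₀ ⬝ᵥ a = 0)
    (V : ℝ → Fin 3 → ℝ)
    (hV : ∀ t ∈ Set.Ioc 0 t₁, V t = rotApply (γ 0) (γ t) W₀) :
    ∀ t ∈ Set.Ioo 0 t₁, DifferentiableAt ℝ V t ∧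
      deriv V t = ((deriv V t) ⬝ᵥ (γ t)) • γ t := by
  set β := b ⬝ᵥ W₀
  set ν := a ⨯₃ b ⬝ᵥ W₀
  have hV_eq : ∀ s ∈ Ioo 0 t₁, V s = β • (cos s • b - sin s • a) + ν • a ⨯₃ b := by
    intro s hs
    rw [hV s (Ioo_subset_Ioc_self hs), hγ, hγ, cos_zero, sin_zero, one_smul, zero_smul, add_zero]
    exact rotApply_greatCircle ha hb hab (sin_pos_of_pos_of_lt_pi hs.1 (hs.2.trans ht₁')) hW₀
  intro t ht
  have hV_deriv : HasDerivAt V ((-β) • γ t) t := by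
    have h : HasDerivAt (fun s ↦ β • (cos s • b - sin s • a) + ν • a ⨯₃ b)
        (β • (-sin t • b - cos t • a)) t :=
      ((((hasDerivAt_cos t).smul_const b).sub ((hasDerivAt_sin t).smul_const a)).const_smul
        β).add_const _
    rw [show (-β) • γ t = β • (-sin t • b - cos t • a) by rw [hγ]; module]
    exact h.congr_of_eventuallyEq (Filter.eventuallyEq_of_mem (isOpen_Ioo.mem_nhds ht) hV_eq)
  refine ⟨hV_deriv.differentiableAt, ?_⟩
  rw [hV_deriv.deriv, smul_dotProduct, hγ, greatCircle_dotProduct_self ha hb hab, smul_eq_mul,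
    mul_one]

/-- Along the unit-speed spherical geodesic `γ(t) = (cos t) a + (sin t) b`
(with `a, b` orthonormal, `0 < t₁ < π`), the vector field
`V(t) = R_{γ(0)→γ(t)}(W₀)` (with `V(0) = W₀`, `⟨W₀,a⟩ = 0`) is differentiable on
`(0,t₁)` and its derivative is normal to the sphere at `γ(t)`; i.e. `V` is parallel
along `γ`. -/
theorem rot_parallel_transport (a b : Fin 3 → ℝ)
    (ha : a ⬝ᵥ a = 1) (hb : b ⬝ᵥ b = 1) (hab : a ⬝ᵥ b = 0)
    (t₁ : ℝ) (ht₁ : 0 < t₁) (ht₁' : t₁ < Real.pi)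
    (γ : ℝ → Fin 3 → ℝ)
    (hγ : ∀ t, γ t = Real.cos t • a + Real.sin t • b)
    (hγanti : ∀ t ∈ Set.Icc 0 t₁, γ 0 + γ t ≠ 0)
    (W₀ : Fin 3 → ℝ) (hW₀ : W₀ ⬝ᵥ a = 0)
    (V : ℝ → Fin 3 → ℝ)
    (hV : ∀ t ∈ Set.Ioc 0 t₁, V t = rotApply (γ 0) (γ t) W₀)
    (hV0 : V 0 = W₀) :
    ∀ t ∈ Set.Ioo 0 t₁, DifferentiableAt ℝ V t ∧
      deriv V t = ((deriv V t) ⬝ᵥ (γ t)) • γ t :=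
  rot_parallel_transport_general a b ha hb hab t₁ ht₁' γ hγ W₀ hW₀ V hV
end
end

section
/- Let N ≥ 1, σ > 0, and let ψ : [0,2] → ℝ be continuous and nonnegative. Suppose x_i, v_i : [0,∞) → ℝ³ (1 ≤ i ≤ N) are differentiable curves with x_i(t) ≠ 0 and x_i(t) × x_k(t) ≠ 0 for all i ≠ k and t ≥ 0, which solve the system ẋ_i = v_i, v̇_i = λ_i x_i + (1/N) Σ_{k=1}^N ψ(‖x_i − x_k‖)(R_{x_k→x_i}(v_k) − v_i) + (σ/N) Σ_{k=1}^N (x_k − x_i), where λ_i := −‖v_i‖²/‖x_i‖² − (σ/N) Σ_{k=1}^N ⟨x_k − x_i, x_i⟩/⟨x_i, x_i⟩ and R_{z→z} := I. If the initial data satisfy ⟨v_i(0), x_i(0)⟩ = 0 and ‖x_i(0)‖ = 1 for all 1 ≤ i ≤ N, then for all t ≥ 0 and all 1 ≤ i ≤ N one has ⟨v_i(t), x_i(t)⟩ = 0 and ‖x_i(t)‖ = 1. -/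
open Matrix Set
open scoped BigOperators

noncomputable section

/-!
Write `y_i = ‖x_i‖²` and `z_i = ⟨v_i, x_i⟩`. Then `ẏ_i = 2 z_i`, and the Lagrange multiplier
cancels everything in `ż_i` except the alignment term; since `R_{x_k→x_i}ᵀ x_i = ‖x_i‖² x_k`,
that term is `(1/N) Σ_k ψ(‖x_i − x_k‖) (y_i z_k − z_i)`. So the defect `(y_i − 1, z_i)_i`
solves a system whose right-hand side is bounded by `K ‖defect‖` as long as the defect is at
most `1` and all distances lie in `[0, 2]`, where `ψ` is bounded. Just after a time at which the
defect vanishes both conditions hold (`x_i × x_k ≠ 0` keeps `‖x_i − x_k‖ < 2` on the sphere), so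
Grönwall's inequality keeps the defect zero a little longer, and continuous induction on
`[0, ∞)` finishes the proof.
-/

open Filter Topology

theorem HasDerivAt.dotProduct {𝕜 ι : Type*} [NontriviallyNormedField 𝕜] [Fintype ι]
    {f g : 𝕜 → ι → 𝕜} {f' g' : ι → 𝕜} {t : 𝕜}
    (hf : HasDerivAt f f' t) (hg : HasDerivAt g g' t) :
    HasDerivAt (fun s => f s ⬝ᵥ g s) (f' ⬝ᵥ g t + f t ⬝ᵥ g') t := by
  simp only [_root_.dotProduct, ← Finset.sum_add_distrib]
  exact HasDerivAt.fun_sum fun j _ => (hasDerivAt_pi.mp hf j).mul (hasDerivAt_pi.mp hg j)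

lemma abs_inv_mul_sum_le {n : ℕ} {f : Fin n → ℝ} {C : ℝ} (hC : 0 ≤ C) (hf : ∀ k, |f k| ≤ C) :
    |(n : ℝ)⁻¹ * ∑ k, f k| ≤ C := by
  rcases eq_or_ne (n : ℝ) 0 with hn | hn
  · simpa [hn] using hC
  calc |(n : ℝ)⁻¹ * ∑ k, f k| ≤ (n : ℝ)⁻¹ * ∑ k, |f k| := by
        rw [abs_mul, abs_of_nonneg (by positivity)]
        gcongr
        exact Finset.abs_sum_le_sum_abs _ _
    _ ≤ (n : ℝ)⁻¹ * (n * C) := by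
        gcongr
        simpa using Finset.sum_le_card_nsmul Finset.univ _ _ fun k _ => hf k
    _ = C := inv_mul_cancel_left₀ hn C

lemma eventually_eq_zero_of_norm_deriv_le {E : Type*} [NormedAddCommGroup E] [NormedSpace ℝ E]
    {F F' : ℝ → E} {K t₀ : ℝ} (h₀ : F t₀ = 0)
    (hF : ∀ᶠ u in 𝓝[≥] t₀, HasDerivAt F (F' u) u ∧ ‖F' u‖ ≤ K * ‖F u‖) :
    ∀ᶠ u in 𝓝[>] t₀, F u = 0 := by
  obtain ⟨b, hb, hsub⟩ := mem_nhdsGE_iff_exists_Icc_subset.mp hF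
  have hzero := eq_zero_of_abs_deriv_le_mul_abs_self_of_eq_zero_right
    (fun u hu => (hsub hu).1.continuousAt.continuousWithinAt)
    (fun u hu => (hsub (Ico_subset_Icc_self hu)).1.hasDerivWithinAt) h₀
    (fun u hu => (hsub (Ico_subset_Icc_self hu)).2)
  filter_upwards [Ioo_mem_nhdsGT hb] with u hu
  exact hzero u (Ioo_subset_Icc_self hu)

lemma eq_zero_of_forall_eventually_nhdsGT {E : Type*} [TopologicalSpace E] [T1Space E] [Zero E]
    {F : ℝ → E} {a : ℝ} (hF : ContinuousOn F (Ici a)) (ha : F a = 0)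
    (hloc : ∀ t ≥ a, F t = 0 → ∀ᶠ u in 𝓝[>] t, F u = 0) :
    ∀ t ≥ a, F t = 0 := by
  intro t ht
  have hclosed : IsClosed ({u | F u = 0} ∩ Icc a t) := by
    rw [inter_comm]
    exact (hF.mono Icc_subset_Ici_self).preimage_isClosed_of_isClosed isClosed_Icc
      isClosed_singleton
  exact hclosed.Icc_subset_of_forall_mem_nhdsWithin ha (fun u hu => hloc u hu.2.1 hu.1)
    ⟨ht, le_rfl⟩

lemma dotProduct_self_nonneg' {n : Type*} [Fintype n] (a : n → ℝ) : 0 ≤ a ⬝ᵥ a := by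
  simpa using dotProduct_star_self_nonneg a

lemma enorm3_sq (a : Fin 3 → ℝ) : enorm3 a ^ 2 = a ⬝ᵥ a :=
  Real.sq_sqrt (dotProduct_self_nonneg' a)

lemma enorm3_eq_one_iff {a : Fin 3 → ℝ} : enorm3 a = 1 ↔ a ⬝ᵥ a = 1 :=
  Real.sqrt_eq_one

lemma continuous_enorm3 : Continuous enorm3 :=
  Real.continuous_sqrt.comp (continuous_id.dotProduct continuous_id)

lemma cross3_eq_cross (a b : Fin 3 → ℝ) : cross3 a b = a ⨯₃ b := rfl

lemma ne_of_cross3_ne_zero {a b : Fin 3 → ℝ} (h : cross3 a b ≠ 0) : a ≠ b := by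
  rintro rfl
  exact h (cross_self a)

lemma enorm3_sub_lt_two {a b : Fin 3 → ℝ} (ha : a ⬝ᵥ a = 1) (hb : b ⬝ᵥ b = 1)
    (hab : cross3 a b ≠ 0) : enorm3 (a - b) < 2 := by
  have hcross : 0 < 1 - (a ⬝ᵥ b) ^ 2 := by
    have h := cross_dot_cross a b a b
    rw [ha, hb, dotProduct_comm b a, ← cross3_eq_cross] at h
    have hpos := (dotProduct_self_nonneg' _).lt_of_ne' (mt dotProduct_self_eq_zero.mp hab)
    rw [h] at hpos
    linarith
  have hsub : (a - b) ⬝ᵥ (a - b) = 2 - 2 * (a ⬝ᵥ b) := by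
    simp only [sub_dotProduct, dotProduct_sub, ha, hb, dotProduct_comm b a]
    ring
  rw [enorm3, Real.sqrt_lt' two_pos, hsub]
  nlinarith

lemma vecMul_rotMatrix (z₁ z₂ : Fin 3 → ℝ) : z₂ ᵥ* rotMatrix z₁ z₂ = (z₂ ⬝ᵥ z₂) • z₁ := by
  have hu : z₂ ⬝ᵥ uvec3 z₁ z₂ = 0 := by
    rw [uvec3, dotProduct_smul, cross3_eq_cross, dot_cross_self, smul_zero]
  simp only [rotMatrix, vecMul_add, vecMul_sub, vecMul_smul, vecMul_one, vecMul_vecMulVec, hu,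
    zero_smul, smul_zero, add_zero, dotProduct_comm z₂ z₁]
  abel

lemma rotApply_dotProduct_of_ne {z₁ z₂ : Fin 3 → ℝ} (h : z₁ ≠ z₂) (w : Fin 3 → ℝ) :
    rotApply z₁ z₂ w ⬝ᵥ z₂ = (z₂ ⬝ᵥ z₂) * (w ⬝ᵥ z₁) := by
  rw [rotApply, if_neg h, dotProduct_comm, dotProduct_mulVec, vecMul_rotMatrix, smul_dotProduct,
    smul_eq_mul, dotProduct_comm z₁]

section Model

variable {N : ℕ}

def accel (σ : ℝ) (ψ : ℝ → ℝ) (X V : Fin N → Fin 3 → ℝ) (i : Fin N) : Fin 3 → ℝ :=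
  (-(enorm3 (V i))^2 / (enorm3 (X i))^2
      - σ / N * ∑ k, ((X k - X i) ⬝ᵥ (X i)) / ((X i) ⬝ᵥ (X i))) • X i
    + (N : ℝ)⁻¹ • ∑ k, ψ (enorm3 (X i - X k)) • (rotApply (X k) (X i) (V k) - V i)
    + (σ / N) • ∑ k, (X k - X i)

def alignmentRate (ψ : ℝ → ℝ) (X V : Fin N → Fin 3 → ℝ) (i : Fin N) : ℝ :=
  (N : ℝ)⁻¹ * ∑ k, ψ (enorm3 (X i - X k)) * (rotApply (X k) (X i) (V k) ⬝ᵥ X i - V i ⬝ᵥ X i)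

lemma accel_dotProduct_add_self (σ : ℝ) (ψ : ℝ → ℝ) {X : Fin N → Fin 3 → ℝ}
    (V : Fin N → Fin 3 → ℝ) {i : Fin N} (hX : X i ≠ 0) :
    accel σ ψ X V i ⬝ᵥ X i + V i ⬝ᵥ V i = alignmentRate ψ X V i := by
  have hy : X i ⬝ᵥ X i ≠ 0 := mt dotProduct_self_eq_zero.mp hX
  simp only [accel, alignmentRate, add_dotProduct, smul_dotProduct, sum_dotProduct, sub_dotProduct,
    smul_eq_mul, enorm3_sq, ← Finset.sum_div]
  field_simp
  ring

def sphereDefect (X V : Fin N → Fin 3 → ℝ) : Fin N → ℝ × ℝ :=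
  fun i => (X i ⬝ᵥ X i - 1, V i ⬝ᵥ X i)

def defectRate (ψ : ℝ → ℝ) (X V : Fin N → Fin 3 → ℝ) : Fin N → ℝ × ℝ :=
  fun i => (2 * (V i ⬝ᵥ X i), alignmentRate ψ X V i)

lemma sphereDefect_eq_zero_iff {X V : Fin N → Fin 3 → ℝ} :
    sphereDefect X V = 0 ↔ ∀ i, V i ⬝ᵥ X i = 0 ∧ enorm3 (X i) = 1 := by
  simp only [funext_iff, sphereDefect, Pi.zero_apply, Prod.ext_iff, Prod.fst_zero, Prod.snd_zero,
    sub_eq_zero, enorm3_eq_one_iff, and_comm]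

lemma hasDerivAt_sphereDefect (σ : ℝ) (ψ : ℝ → ℝ) {x v : Fin N → ℝ → Fin 3 → ℝ} {t : ℝ}
    (hx : ∀ i, x i t ≠ 0) (hxd : ∀ i, HasDerivAt (x i) (v i t) t)
    (hvd : ∀ i, HasDerivAt (v i) (accel σ ψ (x · t) (v · t) i) t) :
    HasDerivAt (fun s => sphereDefect (x · s) (v · s)) (defectRate ψ (x · t) (v · t)) t := by
  refine hasDerivAt_pi.mpr fun i => HasDerivAt.prodMk ?_ ?_
  · refine (((hxd i).dotProduct (hxd i)).sub_const 1).congr_deriv ?_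
    rw [dotProduct_comm (x i t)]
    ring
  · exact ((hvd i).dotProduct (hxd i)).congr_deriv (accel_dotProduct_add_self σ ψ _ (hx i))

lemma abs_sphereDefect_fst_le (X V : Fin N → Fin 3 → ℝ) (i : Fin N) :
    |X i ⬝ᵥ X i - 1| ≤ ‖sphereDefect X V‖ :=
  (norm_fst_le _).trans (norm_le_pi_norm (sphereDefect X V) i)

lemma abs_sphereDefect_snd_le (X V : Fin N → Fin 3 → ℝ) (i : Fin N) :
    |V i ⬝ᵥ X i| ≤ ‖sphereDefect X V‖ :=
  (norm_snd_le _).trans (norm_le_pi_norm (sphereDefect X V) i)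

lemma abs_rotApply_dotProduct_sub_le {X : Fin N → Fin 3 → ℝ} (V : Fin N → Fin 3 → ℝ)
    (hX : Pairwise fun k i => X k ≠ X i) (hD : ‖sphereDefect X V‖ ≤ 1) (i k : Fin N) :
    |rotApply (X k) (X i) (V k) ⬝ᵥ X i - V i ⬝ᵥ X i| ≤ 3 * ‖sphereDefect X V‖ := by
  set D := ‖sphereDefect X V‖
  rcases eq_or_ne k i with rfl | hki
  · simp only [rotApply, if_true, sub_self, abs_zero]
    exact mul_nonneg zero_le_three (norm_nonneg _)
  have hy := abs_sphereDefect_fst_le X V i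
  have hzi := abs_sphereDefect_snd_le X V i
  have hzk := abs_sphereDefect_snd_le X V k
  calc |rotApply (X k) (X i) (V k) ⬝ᵥ X i - V i ⬝ᵥ X i|
      = |(X i ⬝ᵥ X i - 1) * (V k ⬝ᵥ X k) + V k ⬝ᵥ X k - V i ⬝ᵥ X i| := by
        rw [rotApply_dotProduct_of_ne (hX hki)]
        ring_nf
    _ ≤ D * D + D + D := by
        refine (abs_sub _ _).trans (add_le_add ((abs_add_le _ _).trans (add_le_add ?_ hzk)) hzi)
        rw [abs_mul]
        exact mul_le_mul hy hzk (abs_nonneg _) (norm_nonneg _)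
    _ ≤ 3 * D := by nlinarith [norm_nonneg (sphereDefect X V)]

lemma norm_defectRate_le {ψ : ℝ → ℝ} {X : Fin N → Fin 3 → ℝ} (V : Fin N → Fin 3 → ℝ) {C : ℝ}
    (hX : Pairwise fun k i => X k ≠ X i) (hC : 0 ≤ C)
    (hψ : ∀ i k, |ψ (enorm3 (X i - X k))| ≤ C) (hD : ‖sphereDefect X V‖ ≤ 1) :
    ‖defectRate ψ X V‖ ≤ (2 + 3 * C) * ‖sphereDefect X V‖ := by
  have hD0 := norm_nonneg (sphereDefect X V)
  refine (pi_norm_le_iff_of_nonneg (by positivity)).mpr fun i => ?_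
  rw [Prod.norm_def, Real.norm_eq_abs, Real.norm_eq_abs]
  refine max_le ?_ ?_
  · change |2 * (V i ⬝ᵥ X i)| ≤ _
    rw [abs_mul, abs_two]
    nlinarith [abs_sphereDefect_snd_le X V i]
  · refine (abs_inv_mul_sum_le (C := C * (3 * ‖sphereDefect X V‖)) (by positivity)
      fun k => ?_).trans (by nlinarith)
    rw [abs_mul]
    exact mul_le_mul (hψ i k) (abs_rotApply_dotProduct_sub_le V hX hD i k) (abs_nonneg _) hC

lemma eventually_enorm3_sub_lt_two {x : Fin N → ℝ → Fin 3 → ℝ} {t₀ : ℝ}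
    (hc : ∀ i, ContinuousAt (x i) t₀) (h₁ : ∀ i, enorm3 (x i t₀) = 1)
    (hx : ∀ i k, i ≠ k → cross3 (x i t₀) (x k t₀) ≠ 0) :
    ∀ᶠ u in 𝓝 t₀, ∀ i k, enorm3 (x i u - x k u) < 2 := by
  simp only [eventually_all]
  intro i k
  refine (continuous_enorm3.continuousAt.comp ((hc i).sub (hc k))).eventually_lt_const ?_
  rcases eq_or_ne i k with rfl | hik
  · simp [enorm3]
  · exact enorm3_sub_lt_two (enorm3_eq_one_iff.mp (h₁ i)) (enorm3_eq_one_iff.mp (h₁ k))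
      (hx i k hik)

end Model

theorem sphere_invariance_general (N : ℕ) (σ : ℝ)
    (ψ : ℝ → ℝ) (hψc : ContinuousOn ψ (Set.Icc 0 2))
    (x v : Fin N → ℝ → Fin 3 → ℝ)
    (hx0 : ∀ i, ∀ t : ℝ, 0 ≤ t → x i t ≠ 0)
    (hxx : ∀ i k, i ≠ k → ∀ t : ℝ, 0 ≤ t → cross3 (x i t) (x k t) ≠ 0)
    (hode1 : ∀ i, ∀ t : ℝ, 0 ≤ t → HasDerivAt (x i) (v i t) t)
    (hode2 : ∀ i, ∀ t : ℝ, 0 ≤ t → HasDerivAt (v i)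
      ((-(enorm3 (v i t))^2 / (enorm3 (x i t))^2
          - σ / N * ∑ k, ((x k t - x i t) ⬝ᵥ (x i t)) / ((x i t) ⬝ᵥ (x i t))) • x i t
        + (N : ℝ)⁻¹ • ∑ k, ψ (enorm3 (x i t - x k t)) •
            (rotApply (x k t) (x i t) (v k t) - v i t)
        + (σ / N) • ∑ k, (x k t - x i t)) t)
    (hinit1 : ∀ i, (v i 0) ⬝ᵥ (x i 0) = 0)
    (hinit2 : ∀ i, enorm3 (x i 0) = 1) :
    ∀ t : ℝ, 0 ≤ t → ∀ i, (v i t) ⬝ᵥ (x i t) = 0 ∧ enorm3 (x i t) = 1 := by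
  set F : ℝ → Fin N → ℝ × ℝ := fun t => sphereDefect (x · t) (v · t)
  have hF' : ∀ t ≥ 0, HasDerivAt F (defectRate ψ (x · t) (v · t)) t := fun t ht =>
    hasDerivAt_sphereDefect σ ψ (fun i => hx0 i t ht) (fun i => hode1 i t ht)
      (fun i => hode2 i t ht)
  obtain ⟨C, hC⟩ := isCompact_Icc.exists_bound_of_continuousOn hψc
  have hC₀ : 0 ≤ C := (norm_nonneg _).trans (hC 0 ⟨le_rfl, zero_le_two⟩)
  have hloc : ∀ t₀ ≥ 0, F t₀ = 0 → ∀ᶠ u in 𝓝[>] t₀, F u = 0 := by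
    intro t₀ ht₀ h₀
    have hdist := eventually_enorm3_sub_lt_two (fun i => (hode1 i t₀ ht₀).continuousAt)
      (fun i => (sphereDefect_eq_zero_iff.mp h₀ i).2) (fun i k hik => hxx i k hik t₀ ht₀)
    have hsmall : ∀ᶠ u in 𝓝 t₀, ‖F u‖ < 1 :=
      (hF' t₀ ht₀).continuousAt.norm.eventually_lt_const (by simp [h₀])
    refine eventually_eq_zero_of_norm_deriv_le (F' := fun u => defectRate ψ (x · u) (v · u))
      (K := 2 + 3 * C) h₀ ?_
    filter_upwards [self_mem_nhdsWithin, nhdsWithin_le_nhds (hdist.and hsmall)]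
      with u (hu : t₀ ≤ u) ⟨hdu, hFu⟩
    have hu₀ : 0 ≤ u := ht₀.trans hu
    refine ⟨hF' u hu₀, norm_defectRate_le _
      (fun k i hki => ne_of_cross3_ne_zero (hxx k i hki u hu₀)) hC₀ (fun i k => ?_) hFu.le⟩
    exact (Real.norm_eq_abs _).symm.trans_le (hC _ ⟨Real.sqrt_nonneg _, (hdu i k).le⟩)
  have hzero := eq_zero_of_forall_eventually_nhdsGT
    (fun t ht => (hF' t ht).continuousAt.continuousWithinAt)
    (sphereDefect_eq_zero_iff.mpr fun i => ⟨hinit1 i, hinit2 i⟩) hloc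
  exact fun t ht => sphereDefect_eq_zero_iff.mp (hzero t ht)

/-- For the Cucker–Smale type model on the sphere with Lagrange
multiplier `λ_i = −‖v_i‖²/‖x_i‖² − (σ/N) Σ_k ⟨x_k − x_i, x_i⟩/⟨x_i,x_i⟩` and
inter-particle bonding force, initial data on the unit sphere with tangent
velocities stay on the unit sphere with tangent velocities for all time. -/
theorem sphere_invariance (N : ℕ) (hN : 1 ≤ N) (σ : ℝ) (hσ : 0 < σ)
    (ψ : ℝ → ℝ) (hψc : ContinuousOn ψ (Set.Icc 0 2))
    (hψnn : ∀ s ∈ Set.Icc (0:ℝ) 2, 0 ≤ ψ s)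
    (x v : Fin N → ℝ → Fin 3 → ℝ)
    (hx0 : ∀ i, ∀ t : ℝ, 0 ≤ t → x i t ≠ 0)
    (hxx : ∀ i k, i ≠ k → ∀ t : ℝ, 0 ≤ t → cross3 (x i t) (x k t) ≠ 0)
    (hode1 : ∀ i, ∀ t : ℝ, 0 ≤ t → HasDerivAt (x i) (v i t) t)
    (hode2 : ∀ i, ∀ t : ℝ, 0 ≤ t → HasDerivAt (v i)
      ((-(enorm3 (v i t))^2 / (enorm3 (x i t))^2
          - σ / N * ∑ k, ((x k t - x i t) ⬝ᵥ (x i t)) / ((x i t) ⬝ᵥ (x i t))) • x i t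
        + (N : ℝ)⁻¹ • ∑ k, ψ (enorm3 (x i t - x k t)) •
            (rotApply (x k t) (x i t) (v k t) - v i t)
        + (σ / N) • ∑ k, (x k t - x i t)) t)
    (hinit1 : ∀ i, (v i 0) ⬝ᵥ (x i 0) = 0)
    (hinit2 : ∀ i, enorm3 (x i 0) = 1) :
    ∀ t : ℝ, 0 ≤ t → ∀ i, (v i t) ⬝ᵥ (x i t) = 0 ∧ enorm3 (x i t) = 1 :=
  sphere_invariance_general N σ ψ hψc x v hx0 hxx hode1 hode2 hinit1 hinit2
end
end

section
/- Let ψ₀ > 0 and σ > 0, and let A be the real 3×3 matrix with rows (0, 2, 0), (−σ, −ψ₀, 1), (0, −2σ, −2ψ₀). Then the complex eigenvalues of A are exactly −ψ₀, −ψ₀ + w, and −ψ₀ − w, where w ∈ ℂ satisfies w² = ψ₀² − 4σ. Moreover, every complex eigenvalue λ of A satisfies Re λ ≤ −ψ₀ when ψ₀² ≤ 4σ, and Re λ ≤ −2σ/ψ₀ when ψ₀² > 4σ; in particular, every eigenvalue of A has strictly negative real part. -/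
/-!
The characteristic polynomial of `A` is `(λ + ψ₀)(λ² + 2ψ₀λ + 4σ)`, and the quadratic factor has
roots `-ψ₀ ± w`. If `ψ₀² ≤ 4σ` the quadratic has no real root other than possibly `-ψ₀`, so the
imaginary part of the equation forces `Re λ = -ψ₀`. If `ψ₀² > 4σ` its roots are real, and then
`2ψ₀λ = -4σ - λ² ≤ -4σ`.
-/

theorem mem_spectrum_iff_cubic_eq_zero (a b μ : ℂ) :
    μ ∈ spectrum ℂ !![0, 2, 0; -b, -a, 1; 0, -2 * b, -2 * a] ↔
      (μ + a) * (μ ^ 2 + 2 * a * μ + 4 * b) = 0 := by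
  rw [spectrum.mem_iff, Matrix.isUnit_iff_isUnit_det, isUnit_iff_ne_zero, not_not]
  congr! 1
  rw [Matrix.algebraMap_eq_diagonal, Matrix.det_fin_three]
  simp only [Matrix.sub_apply, Matrix.diagonal_apply, Pi.algebraMap_apply, Algebra.algebraMap_self,
    RingHom.id_apply, Matrix.of_apply, Matrix.cons_val', Matrix.cons_val_zero, Matrix.cons_val_one,
    Matrix.cons_val, Matrix.cons_val_fin_one, Fin.reduceEq, if_true, if_false]
  ring

theorem spectrum_eq_of_sq_eq (a b w : ℂ) (hw : w ^ 2 = a ^ 2 - 4 * b) :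
    spectrum ℂ !![0, 2, 0; -b, -a, 1; 0, -2 * b, -2 * a] = {-a, -a + w, -a - w} := by
  ext μ
  have hfactor : (μ + a) * (μ ^ 2 + 2 * a * μ + 4 * b) =
      (μ - -a) * ((μ - (-a + w)) * (μ - (-a - w))) := by
    linear_combination (μ + a) * hw
  rw [mem_spectrum_iff_cubic_eq_zero, hfactor]
  simp only [mul_eq_zero, sub_eq_zero, Set.mem_insert_iff, Set.mem_singleton_iff]

namespace Complex

variable {p q : ℝ} {z : ℂ}

theorem re_im_of_quadratic_eq_zero (hz : z ^ 2 + 2 * p * z + q = 0) :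
    z.re ^ 2 - z.im ^ 2 + 2 * p * z.re + q = 0 ∧ z.im * (z.re + p) = 0 := by
  have hre := congrArg re hz
  have him := congrArg im hz
  simp only [sq, add_re, add_im, mul_re, mul_im, ofReal_re, ofReal_im, re_ofNat, im_ofNat,
    zero_re, zero_im] at hre him
  constructor <;> linarith

theorem re_eq_of_quadratic_eq_zero_of_sq_le (hz : z ^ 2 + 2 * p * z + q = 0)
    (hpq : p ^ 2 ≤ q) : z.re = -p := by
  obtain ⟨hre, him⟩ := re_im_of_quadratic_eq_zero hz
  rcases mul_eq_zero.mp him with h | h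
  · rw [h] at hre
    nlinarith [sq_nonneg (z.re + p)]
  · linarith

theorem im_eq_zero_of_quadratic_eq_zero_of_lt_sq (hz : z ^ 2 + 2 * p * z + q = 0)
    (hpq : q < p ^ 2) : z.im = 0 := by
  obtain ⟨hre, him⟩ := re_im_of_quadratic_eq_zero hz
  refine (mul_eq_zero.mp him).resolve_right fun h => ?_
  rw [show z.re = -p by linarith] at hre
  nlinarith [sq_nonneg z.im]

theorem re_le_of_quadratic_eq_zero_of_lt_sq (hp : 0 < p) (hz : z ^ 2 + 2 * p * z + q = 0)
    (hpq : q < p ^ 2) : z.re ≤ -(q / (2 * p)) := by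
  have hre := (re_im_of_quadratic_eq_zero hz).1
  rw [im_eq_zero_of_quadratic_eq_zero_of_lt_sq hz hpq] at hre
  rw [le_neg, div_le_iff₀ (by positivity)]
  nlinarith [sq_nonneg z.re]

end Complex

/-- The eigenvalues of the matrix
`A = !![0, 2, 0; −σ, −ψ₀, 1; 0, −2σ, −2ψ₀]` (regarded over `ℂ`) are exactly
`−ψ₀`, `−ψ₀ + w`, `−ψ₀ − w` where `w² = ψ₀² − 4σ`; every eigenvalue has real part
`≤ −ψ₀` if `ψ₀² ≤ 4σ`, real part `≤ −2σ/ψ₀` if `ψ₀² > 4σ`, and in particular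
strictly negative real part. -/
theorem eigenvalues_of_A (ψ₀ σ : ℝ) (hψ₀ : 0 < ψ₀) (hσ : 0 < σ)
    (A : Matrix (Fin 3) (Fin 3) ℂ)
    (hA : A = !![0, 2, 0;
                 -(σ : ℂ), -(ψ₀ : ℂ), 1;
                 0, -2 * (σ : ℂ), -2 * (ψ₀ : ℂ)]) :
    (∀ w : ℂ, w ^ 2 = (ψ₀ : ℂ) ^ 2 - 4 * (σ : ℂ) →
      spectrum ℂ A = {-(ψ₀ : ℂ), -(ψ₀ : ℂ) + w, -(ψ₀ : ℂ) - w}) ∧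
    (ψ₀ ^ 2 ≤ 4 * σ → ∀ lam ∈ spectrum ℂ A, lam.re ≤ -ψ₀) ∧
    (4 * σ < ψ₀ ^ 2 → ∀ lam ∈ spectrum ℂ A, lam.re ≤ -(2 * σ / ψ₀)) ∧
    (∀ lam ∈ spectrum ℂ A, lam.re < 0) := by
  have hroots : ∀ lam ∈ spectrum ℂ A,
      lam = -ψ₀ ∨ lam ^ 2 + 2 * ψ₀ * lam + ((4 * σ : ℝ) : ℂ) = 0 := by
    intro lam hlam
    rw [hA, mem_spectrum_iff_cubic_eq_zero] at hlam
    push_cast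
    exact (mul_eq_zero.mp hlam).imp eq_neg_of_add_eq_zero_left id
  have hle : ψ₀ ^ 2 ≤ 4 * σ → ∀ lam ∈ spectrum ℂ A, lam.re ≤ -ψ₀ := by
    intro h lam hlam
    rcases hroots lam hlam with rfl | hq
    · simp
    · exact (Complex.re_eq_of_quadratic_eq_zero_of_sq_le hq h).le
  have hlt : 4 * σ < ψ₀ ^ 2 → ∀ lam ∈ spectrum ℂ A, lam.re ≤ -(2 * σ / ψ₀) := by
    intro h lam hlam
    rcases hroots lam hlam with rfl | hq
    · rw [Complex.neg_re, Complex.ofReal_re, neg_le_neg_iff, div_le_iff₀ hψ₀]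
      nlinarith
    · convert Complex.re_le_of_quadratic_eq_zero_of_lt_sq hψ₀ hq h using 2
      ring
  refine ⟨fun w hw => hA ▸ spectrum_eq_of_sq_eq _ _ w hw, hle, hlt, fun lam hlam => ?_⟩
  rcases le_or_gt (ψ₀ ^ 2) (4 * σ) with h | h
  · linarith [hle h lam hlam]
  · linarith [hlt h lam hlam, div_pos (mul_pos two_pos hσ) hψ₀]
end
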